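/- For fixed δ ∈ (0,1) and n(m) = m·log m + m·log(1/δ), the probability that n(m) i.i.d. uniform draws from {1,…,m} fail to cover {1,…,m} converges to 1 - exp(-δ) as m → ∞. -/

import Mathlib

open Real Filter

/-- The probability that `n` i.i.d. uniform draws from `{1,…,m}` fail to cover
`{1,…,m}` (a uniformly random function `Fin n → Fin m` is not surjective). -/
noncomputable def couponMissProb (m n : ℕ) : ℝ :=
  (Nat.card {f : Fin n → Fin m // ¬ Function.Surjective f} : ℝ) / (m : ℝ) ^ n

open Finset Topology
open scoped Nat

/-!
By inclusion–exclusion, `n` uniform draws cover all `m` coupons with probability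
`∑ j, (-1)^j C(m, j) (1 - j/m)^n`. When `n/m - log m → c`, the `j`-th term tends to
`(-e^{-c})^j / j!`: `C(m, j) e^{-jn/m}` is a Poisson-type term with mean `m e^{-n/m} → e^{-c}`,
and `(1 - j/m)^n = e^{-jn/m} (1 + o(1))` because `n (j/m)^2 → 0`. Since
`C(m, j) (1 - j/m)^n ≤ (m e^{-n/m})^j / j!`, the terms are dominated uniformly in `m` by a
summable sequence, so Tannery's theorem gives the limit `exp (-e^{-c})` for the covering
probability.
-/

theorem Fintype.card_surjective_eq_sum (α β : Type*) [Fintype α] [Fintype β] [DecidableEq α]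
    [DecidableEq β] :
    (Fintype.card {f : α → β // Function.Surjective f} : ℤ) =
      ∑ j ∈ range (card β + 1),
        (-1 : ℤ) ^ j * (card β).choose j * ((card β - j : ℕ) : ℤ) ^ card α := by
  set missing : β → Finset (α → β) := fun b ↦ {f | ∀ a, f a ≠ b}
  have h_surj :
      ({f | Function.Surjective f} : Finset (α → β)) = univ.inf fun b ↦ (missing b)ᶜ := by
    ext f
    rw [mem_filter]
    simp [missing, mem_inf, Function.Surjective]
  have h_missing (t : Finset β) : #(t.inf missing) = (card β - #t) ^ card α := by
    have : t.inf missing = Fintype.piFinset fun _ ↦ tᶜ := by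
      ext f
      simp only [missing, mem_inf, mem_filter, mem_univ, true_and, Fintype.mem_piFinset,
        mem_compl]
      exact ⟨fun h a ha ↦ h _ ha a rfl, fun h b hb a hab ↦ h a (hab ▸ hb)⟩
    rw [this, Fintype.card_piFinset, prod_const, card_compl, card_univ]
  rw [Fintype.card_subtype, h_surj, inclusion_exclusion_card_inf_compl]
  simp_rw [h_missing]
  rw [sum_powerset_apply_card (fun k ↦ (-1 : ℤ) ^ k * ((card β - k) ^ card α : ℕ))]
  refine Finset.sum_congr rfl fun j _ ↦ ?_
  push_cast [card_univ]
  ring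

lemma couponMissProb_eq_one_sub_tsum {m : ℕ} (hm : 0 < m) (n : ℕ) :
    couponMissProb m n = 1 - ∑' j : ℕ, (-1 : ℝ) ^ j * (m.choose j * (1 - j / m) ^ n) := by
  have h_surj : (Fintype.card {f : Fin n → Fin m // Function.Surjective f} : ℝ) =
      ∑ j ∈ range (m + 1), (-1 : ℝ) ^ j * m.choose j * ((m - j : ℕ) : ℝ) ^ n := by
    have := Fintype.card_surjective_eq_sum (Fin n) (Fin m)
    rw [Fintype.card_fin, Fintype.card_fin] at this
    exact_mod_cast this
  have h_miss : (Nat.card {f : Fin n → Fin m // ¬ Function.Surjective f} : ℝ) =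
      m ^ n - Fintype.card {f : Fin n → Fin m // Function.Surjective f} := by
    rw [Nat.card_eq_fintype_card, Fintype.card_subtype_compl,
      Nat.cast_sub (Fintype.card_subtype_le _), Fintype.card_fun]
    simp
  have h_finite : ∀ j ∉ range (m + 1), (-1 : ℝ) ^ j * (m.choose j * (1 - j / m) ^ n) = 0 := by
    intro j hj
    rw [Nat.choose_eq_zero_of_lt (by simpa [Nat.lt_succ_iff] using hj)]
    simp
  rw [couponMissProb, h_miss, h_surj, tsum_eq_sum h_finite, sub_div, div_self (by positivity),
    sum_div]
  congr 1
  refine Finset.sum_congr rfl fun j hj ↦ ?_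
  rw [Nat.cast_sub (by simpa [Nat.lt_succ_iff] using hj), mul_assoc, mul_div_assoc, mul_div_assoc,
    ← div_pow, sub_div, div_self (by positivity)]

lemma tendsto_one_sub_pow_mul_exp {ι : Type*} {l : Filter ι} {t : ι → ℝ} {n : ι → ℕ}
    (ht : Tendsto t l (𝓝 0)) (hnt : Tendsto (fun i ↦ n i * t i ^ 2) l (𝓝 0)) :
    Tendsto (fun i ↦ (1 - t i) ^ n i * exp (n i * t i)) l (𝓝 1) := by
  have h_small : ∀ᶠ i in l, |t i| ≤ 1 / 2 :=
    (by simpa using ht.abs : Tendsto (|t ·|) l (𝓝 0)).eventually (ge_mem_nhds (by norm_num))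
  have h_log : Tendsto (fun i ↦ n i * (log (1 - t i) + t i)) l (𝓝 0) := by
    refine squeeze_zero_norm' ?_ (by simpa using hnt.const_mul 2)
    filter_upwards [h_small] with i hi
    have h_taylor : |t i + log (1 - t i)| ≤ |t i| ^ 2 / (1 - |t i|) := by
      simpa using abs_log_sub_add_sum_range_le (x := t i) (by linarith) 1
    have h_div : |t i| ^ 2 / (1 - |t i|) ≤ 2 * t i ^ 2 := by
      rw [div_le_iff₀ (by linarith), sq_abs]
      nlinarith [sq_nonneg (t i)]
    rw [norm_mul, Real.norm_natCast, Real.norm_eq_abs, add_comm]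
    calc (n i : ℝ) * |t i + log (1 - t i)| ≤ n i * (2 * t i ^ 2) := by
          gcongr; exact h_taylor.trans h_div
      _ = 2 * (n i * t i ^ 2) := by ring
  have h_exp := (continuous_exp.tendsto 0).comp h_log
  rw [exp_zero] at h_exp
  refine h_exp.congr' ?_
  filter_upwards [h_small] with i hi
  have h_pos : 0 < 1 - t i := by linarith [le_abs_self (t i)]
  rw [Function.comp_apply, mul_add, exp_add, exp_nat_mul, exp_log h_pos]

lemma abs_choose_mul_one_sub_pow_le (m n j : ℕ) :
    |(m.choose j : ℝ) * (1 - j / m) ^ n| ≤ (m * exp (-(n / m))) ^ j / j ! := by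
  rcases lt_or_ge m j with hmj | hjm
  · simp only [Nat.choose_eq_zero_of_lt hmj, Nat.cast_zero, zero_mul, abs_zero]
    positivity
  have h_nonneg : 0 ≤ 1 - (j : ℝ) / m :=
    sub_nonneg.2 (div_le_one_of_le₀ (by exact_mod_cast hjm) (by positivity))
  have h_pow : (1 - (j : ℝ) / m) ^ n ≤ exp (-(n / m)) ^ j := by
    calc (1 - (j : ℝ) / m) ^ n ≤ exp (-(j / m)) ^ n := by gcongr; exact one_sub_le_exp_neg _
      _ = exp (-(n / m)) ^ j := by rw [← exp_nat_mul, ← exp_nat_mul]; ring_nf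
  rw [abs_of_nonneg (by positivity), mul_pow, mul_div_right_comm]
  exact mul_le_mul (Nat.choose_le_pow_div j m) h_pow (by positivity) (by positivity)

namespace CouponCollector

variable {n : ℕ → ℕ} {c : ℝ}

lemma tendsto_mul_exp_neg_div
    (hn : Tendsto (fun m : ℕ ↦ (n m : ℝ) / m - log m) atTop (𝓝 c)) :
    Tendsto (fun m : ℕ ↦ m * exp (-(n m / m))) atTop (𝓝 (exp (-c))) := by
  refine ((continuous_exp.tendsto _).comp hn.neg).congr' ?_
  filter_upwards [eventually_gt_atTop 0] with m hm
  rw [Function.comp_apply, neg_sub, sub_eq_add_neg, exp_add, exp_log (by positivity)]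

lemma tendsto_div_sq (hn : Tendsto (fun m : ℕ ↦ (n m : ℝ) / m - log m) atTop (𝓝 c)) :
    Tendsto (fun m : ℕ ↦ (n m : ℝ) / m ^ 2) atTop (𝓝 0) := by
  have h_log : Tendsto (fun m : ℕ ↦ log m / m) atTop (𝓝 0) :=
    isLittleO_log_id_atTop.tendsto_div_nhds_zero.comp tendsto_natCast_atTop_atTop
  have h_rest := hn.div_atTop tendsto_natCast_atTop_atTop
  have h_sum := h_rest.add h_log
  rw [zero_add] at h_sum
  refine h_sum.congr' ?_
  filter_upwards [eventually_gt_atTop 0] with m hm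
  field_simp
  ring

lemma tendsto_choose_mul_one_sub_pow
    (hn : Tendsto (fun m : ℕ ↦ (n m : ℝ) / m - log m) atTop (𝓝 c)) (j : ℕ) :
    Tendsto (fun m : ℕ ↦ m.choose j * (1 - j / m : ℝ) ^ n m) atTop
      (𝓝 (exp (-c) ^ j / j !)) := by
  have h_poisson := ProbabilityTheory.tendsto_choose_mul_pow_atTop j (tendsto_mul_exp_neg_div hn)
  have h_corr :
      Tendsto (fun m : ℕ ↦ (1 - j / m : ℝ) ^ n m * exp (n m * (j / m))) atTop (𝓝 1) := by
    refine tendsto_one_sub_pow_mul_exp (tendsto_const_div_atTop_nhds_zero_nat _) ?_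
    have h_sq := (tendsto_div_sq hn).const_mul ((j : ℝ) ^ 2)
    rw [mul_zero] at h_sq
    exact h_sq.congr fun m ↦ by ring
  have h_prod := h_poisson.mul h_corr
  rw [mul_one] at h_prod
  refine h_prod.congr fun m ↦ ?_
  have h_cancel : exp (-(n m / m)) ^ j * exp (n m * (j / m)) = 1 := by
    rw [← exp_nat_mul, ← exp_add, ← exp_zero]
    ring_nf
  rw [mul_mul_mul_comm, h_cancel, mul_one]

theorem tendsto_couponMissProb
    (hn : Tendsto (fun m : ℕ ↦ (n m : ℝ) / m - log m) atTop (𝓝 c)) :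
    Tendsto (fun m ↦ couponMissProb m (n m)) atTop (𝓝 (1 - exp (-exp (-c)))) := by
  have h_cover :
      Tendsto (fun m : ℕ ↦ ∑' j : ℕ, (-1 : ℝ) ^ j * (m.choose j * (1 - j / m) ^ n m))
        atTop (𝓝 (exp (-exp (-c)))) := by
    have h_series := NormedSpace.expSeries_div_hasSum_exp (-exp (-c))
    rw [← exp_eq_exp_ℝ] at h_series
    rw [← h_series.tsum_eq]
    refine tendsto_tsum_of_dominated_convergence (Real.summable_pow_div_factorial (exp (-c) + 1))
      (fun j ↦ ?_) ?_
    · rw [neg_pow (exp (-c)), mul_div_assoc]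
      exact (tendsto_choose_mul_one_sub_pow hn j).const_mul _
    · filter_upwards [(tendsto_mul_exp_neg_div hn).eventually (ge_mem_nhds (lt_add_one _))]
        with m hm j
      rw [norm_mul, norm_pow, norm_neg, norm_one, one_pow, one_mul, Real.norm_eq_abs]
      refine (abs_choose_mul_one_sub_pow_le m (n m) j).trans ?_
      gcongr
  refine (h_cover.const_sub 1).congr' ?_
  filter_upwards [eventually_gt_atTop 0] with m hm
  rw [couponMissProb_eq_one_sub_tsum hm]

end CouponCollector

lemma tendsto_floor_div_sub_log (c : ℝ) :
    Tendsto (fun m : ℕ ↦ (⌊m * log m + m * c⌋₊ : ℝ) / m - log m) atTop (𝓝 c) := by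
  have h_lower : Tendsto (fun m : ℕ ↦ c - 1 / m) atTop (𝓝 c) := by
    simpa using (tendsto_one_div_atTop_nhds_zero_nat (𝕜 := ℝ)).const_sub c
  have h_nonneg : ∀ᶠ m : ℕ in atTop, 0 ≤ log m + c :=
    (tendsto_log_atTop.comp tendsto_natCast_atTop_atTop).eventually_ge_atTop (-c)
      |>.mono fun m hm ↦ by simp only [Function.comp_apply] at hm; linarith
  refine tendsto_of_tendsto_of_tendsto_of_le_of_le' h_lower tendsto_const_nhds ?_ ?_
  · filter_upwards [eventually_gt_atTop 0] with m hm
    have h_floor := div_le_div_of_nonneg_right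
      (Nat.sub_one_lt_floor ((m : ℝ) * log m + m * c)).le (Nat.cast_nonneg m)
    have h_eq : ((m : ℝ) * log m + m * c - 1) / m = log m + c - 1 / m := by field_simp
    linarith
  · filter_upwards [eventually_gt_atTop 0, h_nonneg] with m hm hlog
    have h_floor := div_le_div_of_nonneg_right
      (Nat.floor_le (a := (m : ℝ) * log m + m * c) (by rw [← mul_add]; positivity))
      (Nat.cast_nonneg m)
    have h_eq : ((m : ℝ) * log m + m * c) / m = log m + c := by field_simp
    linarith

theorem coupon_miss_limit_general (δ : ℝ) (hδ0 : 0 < δ) :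
    Tendsto
      (fun m : ℕ => couponMissProb m ⌊(m : ℝ) * Real.log m + (m : ℝ) * Real.log (1 / δ)⌋₊)
      atTop (nhds (1 - Real.exp (-δ))) := by
  have h_exp : exp (-log (1 / δ)) = δ := by rw [one_div, log_inv, neg_neg, exp_log hδ0]
  simpa only [h_exp] using
    CouponCollector.tendsto_couponMissProb (tendsto_floor_div_sub_log (log (1 / δ)))

/-- For fixed `δ ∈ (0,1)` and `n(m) = m·log m + m·log(1/δ)`, the probability that
`n(m)` i.i.d. uniform draws from `{1,…,m}` fail to cover `{1,…,m}` converges to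
`1 - exp(-δ)` as `m → ∞`. -/
theorem coupon_miss_limit (δ : ℝ) (hδ0 : 0 < δ) (hδ1 : δ < 1) :
    Tendsto
      (fun m : ℕ => couponMissProb m ⌊(m : ℝ) * Real.log m + (m : ℝ) * Real.log (1 / δ)⌋₊)
      atTop (nhds (1 - Real.exp (-δ))) :=
  coupon_miss_limit_general δ hδ0
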